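/- If a weight $w$ on $\mathbb{R}^n$ satisfies the doubling condition $w(2Q) \le C\, w(Q)$ for all cubes $Q$ (with doubling constant $C$), then there exists a reverse doubling constant $D > 1$, independent of $Q$, such that $w(2Q) \ge D \cdot w(Q)$ for all cubes $Q \subset \mathbb{R}^n$. -/
import Mathlib

open MeasureTheory Set

/-- The cube `Q(c, ℓ)` in `ℝⁿ` centered at `c` with side length `ℓ`. -/
noncomputable def Cube (n : ℕ) (c : Fin n → ℝ) (ℓ : ℝ) : Set (Fin n → ℝ) :=
  {x | ∀ i, |x i - c i| ≤ ℓ / 2}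

/-- The weighted measure `w(Q(c,ℓ)) = ∫_{Q(c,ℓ)} w(x) dx`. -/
noncomputable def wQ (n : ℕ) (w : (Fin n → ℝ) → ℝ) (c : Fin n → ℝ) (ℓ : ℝ) : ℝ :=
  ∫ x in Cube n c ℓ, w x

lemma cube_eq_Icc (n : ℕ) (c : Fin n → ℝ) (ℓ : ℝ) :
    Cube n c ℓ = Set.Icc (fun i => c i - ℓ/2) (fun i => c i + ℓ/2) := by
  ext x
  simp only [Cube, mem_setOf_eq, Set.mem_Icc, Pi.le_def, abs_le]
  constructor
  · intro h; exact ⟨fun i => by linarith [(h i).1], fun i => by linarith [(h i).2]⟩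
  · intro h i; exact ⟨by linarith [h.1 i], by linarith [h.2 i]⟩

lemma cube_compact (n : ℕ) (c : Fin n → ℝ) (ℓ : ℝ) : IsCompact (Cube n c ℓ) := by
  rw [cube_eq_Icc]; exact isCompact_Icc

lemma cube_measurable (n : ℕ) (c : Fin n → ℝ) (ℓ : ℝ) : MeasurableSet (Cube n c ℓ) := by
  rw [cube_eq_Icc]; exact measurableSet_Icc

lemma cube_subset (n : ℕ) (c c' : Fin n → ℝ) (ℓ ℓ' : ℝ)
    (h : ∀ i, |c i - c' i| + ℓ/2 ≤ ℓ'/2) : Cube n c ℓ ⊆ Cube n c' ℓ' := by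
  intro x hx i
  have h1 := hx i
  have h2 := abs_sub_le (x i) (c i) (c' i)
  have := h i
  linarith

/-- a doubling weight satisfies a reverse doubling inequality with some
constant `D > 1` independent of the cube.  Here `2Q(c,ℓ) = Q(c, 2√n ℓ)`. -/
theorem doubling_implies_reverse_doubling (n : ℕ) (hn : 0 < n)
    (w : (Fin n → ℝ) → ℝ) (hw_nonneg : ∀ x, 0 ≤ w x)
    (hw_loc : LocallyIntegrable w volume)
    (hw_pos : ∀ (c : Fin n → ℝ) (ℓ : ℝ), 0 < ℓ → 0 < wQ n w c ℓ)
    (C : ℝ)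
    (h_doubling : ∀ (c : Fin n → ℝ) (ℓ : ℝ), 0 < ℓ →
      wQ n w c (2 * Real.sqrt n * ℓ) ≤ C * wQ n w c ℓ) :
    ∃ D : ℝ, 1 < D ∧ ∀ (c : Fin n → ℝ) (ℓ : ℝ), 0 < ℓ →
      D * wQ n w c ℓ ≤ wQ n w c (2 * Real.sqrt n * ℓ) := by
  set s := Real.sqrt n with hs
  have hs1 : 1 ≤ s := by
    rw [hs]
    have : (1:ℝ) ≤ (n:ℝ) := by exact_mod_cast hn
    nlinarith [Real.sq_sqrt (by positivity : (0:ℝ) ≤ (n:ℝ)),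
      Real.sqrt_nonneg (n:ℝ)]
  have hs0 : 0 < s := lt_of_lt_of_le one_pos hs1
  -- C is positive
  have hC : 0 < C := by
    have h1 := h_doubling 0 1 one_pos
    have h2 := hw_pos 0 1 one_pos
    have h3 := hw_pos 0 (2 * s * 1) (by positivity)
    nlinarith
  have hC4 : 0 < C ^ 4 := by positivity
  refine ⟨1 + (C ^ 4)⁻¹, by simp [hC4], ?_⟩
  intro c ℓ hℓ
  -- integrability on cubes
  have hint : ∀ (c₀ : Fin n → ℝ) (ℓ₀ : ℝ), IntegrableOn w (Cube n c₀ ℓ₀) volume :=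
    fun c₀ ℓ₀ => hw_loc.integrableOn_isCompact (cube_compact n c₀ ℓ₀)
  -- monotonicity of wQ
  have hmono : ∀ (c₁ c₂ : Fin n → ℝ) (ℓ₁ ℓ₂ : ℝ), Cube n c₁ ℓ₁ ⊆ Cube n c₂ ℓ₂ →
      wQ n w c₁ ℓ₁ ≤ wQ n w c₂ ℓ₂ := by
    intro c₁ c₂ ℓ₁ ℓ₂ hsub
    exact setIntegral_mono_set (hint c₂ ℓ₂) (Filter.Eventually.of_forall hw_nonneg)
      (HasSubset.Subset.eventuallyLE hsub)
  -- the shifted small cube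
  set i0 : Fin n := ⟨0, hn⟩ with hi0
  set c' : Fin n → ℝ := Function.update c i0 (c i0 + 3*ℓ/4) with hc'
  have hcc' : ∀ i, |c' i - c i| ≤ 3*ℓ/4 := by
    intro i
    by_cases h : i = i0
    · subst h; simp only [hc', Function.update_self]
      rw [show c i0 + 3*ℓ/4 - c i0 = 3*ℓ/4 by ring, abs_of_nonneg (by linarith)]
    · simp [hc', Function.update_of_ne h]
      positivity
  -- Q' ⊆ 2Q
  have hQ'sub : Cube n c' (ℓ/4) ⊆ Cube n c (2 * s * ℓ) := by
    apply cube_subset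
    intro i
    have := hcc' i
    nlinarith
  -- Q ∩ Q' = ∅
  have hdisj : Disjoint (Cube n c ℓ) (Cube n c' (ℓ/4)) := by
    rw [Set.disjoint_left]
    intro x hx hx'
    have h1 := hx i0
    have h2 := hx' i0
    have h3 : c' i0 = c i0 + 3*ℓ/4 := by simp [hc']
    rw [h3] at h2
    rw [abs_le] at h1 h2
    linarith [h1.2, h2.1]
  -- doubling chain: wQ(Q) ≤ C^4 wQ(Q')
  have hchain : wQ n w c ℓ ≤ C ^ 4 * wQ n w c' (ℓ/4) := by
    have l0 : (0:ℝ) < ℓ/4 := by linarith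
    have l1 : (0:ℝ) < 2*s*(ℓ/4) := by positivity
    have l2 : (0:ℝ) < 2*s*(2*s*(ℓ/4)) := by positivity
    have l3 : (0:ℝ) < 2*s*(2*s*(2*s*(ℓ/4))) := by positivity
    have d1 := h_doubling c' (ℓ/4) l0
    have d2 := h_doubling c' (2*s*(ℓ/4)) l1
    have d3 := h_doubling c' (2*s*(2*s*(ℓ/4))) l2
    have d4 := h_doubling c' (2*s*(2*s*(2*s*(ℓ/4)))) l3
    have hsub : Cube n c ℓ ⊆ Cube n c' (2*s*(2*s*(2*s*(2*s*(ℓ/4))))) := by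
      apply cube_subset
      intro i
      have h1 : |c i - c' i| ≤ 3*ℓ/4 := by rw [abs_sub_comm]; exact hcc' i
      nlinarith [sq_nonneg (s - 1), sq_nonneg (s^2 - 1)]
    have hm := hmono c c' ℓ _ hsub
    calc wQ n w c ℓ ≤ wQ n w c' (2*s*(2*s*(2*s*(2*s*(ℓ/4))))) := hm
      _ ≤ C * wQ n w c' (2*s*(2*s*(2*s*(ℓ/4)))) := d4
      _ ≤ C * (C * wQ n w c' (2*s*(2*s*(ℓ/4)))) :=
          mul_le_mul_of_nonneg_left d3 hC.le
      _ ≤ C * (C * (C * wQ n w c' (2*s*(ℓ/4)))) :=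
          mul_le_mul_of_nonneg_left (mul_le_mul_of_nonneg_left d2 hC.le) hC.le
      _ ≤ C * (C * (C * (C * wQ n w c' (ℓ/4)))) :=
          mul_le_mul_of_nonneg_left (mul_le_mul_of_nonneg_left
            (mul_le_mul_of_nonneg_left d1 hC.le) hC.le) hC.le
      _ = C ^ 4 * wQ n w c' (ℓ/4) := by ring
  -- hence wQ(Q') ≥ C⁻⁴ wQ(Q)
  have hQ' : (C ^ 4)⁻¹ * wQ n w c ℓ ≤ wQ n w c' (ℓ/4) := by
    rw [inv_mul_le_iff₀ hC4]
    exact hchain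
  -- additivity over the union
  have hunion : wQ n w c ℓ + wQ n w c' (ℓ/4) ≤ wQ n w c (2 * s * ℓ) := by
    have hadd : ∫ x in (Cube n c ℓ ∪ Cube n c' (ℓ/4)), w x
        = (∫ x in Cube n c ℓ, w x) + ∫ x in Cube n c' (ℓ/4), w x :=
      setIntegral_union hdisj (cube_measurable n c' (ℓ/4)) (hint c ℓ) (hint c' (ℓ/4))
    have hsub2 : Cube n c ℓ ∪ Cube n c' (ℓ/4) ⊆ Cube n c (2 * s * ℓ) := by
      apply union_subset _ hQ'sub
      apply cube_subset
      intro i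
      simp only [sub_self, abs_zero]
      nlinarith
    have := setIntegral_mono_set (hint c (2*s*ℓ)) (Filter.Eventually.of_forall hw_nonneg)
      (HasSubset.Subset.eventuallyLE hsub2)
    rw [hadd] at this
    exact this
  have := hQ'
  calc (1 + (C ^ 4)⁻¹) * wQ n w c ℓ = wQ n w c ℓ + (C ^ 4)⁻¹ * wQ n w c ℓ := by ring
    _ ≤ wQ n w c ℓ + wQ n w c' (ℓ/4) := by linarith
    _ ≤ wQ n w c (2 * s * ℓ) := hunion
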